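/- Fix a field k, c⃗ = (c₁,…,c_m), and a partition {1,…,m} = I₁ ⊔ I₂ into nonempty subsets. Let B ⊆ A⁺_{c⃗} be a k-subalgebra of corank g, with 𝔪_B = B ∩ 𝔪. For j = 1, 2 let g_j = dim_k(m_{I_j}/π_{I_j}(𝔪_B)) and set γ = g − g₁ − g₂. Let J₁ = 𝔪_B ∩ m_{I₂} and J₂ = 𝔪_B ∩ m_{I₁}. Then J₁ ∩ J₂ = 0 and dim_k(B/(J₁ + J₂)) = γ + 1. -/

import Mathlib

set_option synthInstance.maxHeartbeats 1000000
set_option maxHeartbeats 2000000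
open Polynomial

/-- The truncated polynomial ring `k[X]/(X^c)`. -/
abbrev TruncP (k : Type*) [CommRing k] (c : ℕ) : Type _ :=
  Polynomial k ⧸ Ideal.span {(X : Polynomial k) ^ c}

/-- The ambient product algebra `∏ i, k[tᵢ]/(tᵢ^{cᵢ})`. -/
abbrev TruncPi (k : Type*) [CommRing k] {ι : Type*} (c : ι → ℕ) : Type _ :=
  ∀ i, TruncP k (c i)

/-- The image of `X` in `TruncP k c`. -/
noncomputable def truncX (k : Type*) [CommRing k] (c : ℕ) : TruncP k c :=
  Ideal.Quotient.mk _ X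

/-- The monomial `tᵢ^j` in `∏ i, k[tᵢ]/(tᵢ^{cᵢ})`. -/
noncomputable def tpow {k : Type*} [CommRing k] {ι : Type*} [DecidableEq ι]
    (c : ι → ℕ) (i : ι) (j : ℕ) : TruncPi k c :=
  Pi.single i (truncX k (c i) ^ j)

/-- The constant term of a truncated polynomial (evaluation at `0`), for `c ≥ 1`. -/
noncomputable def constTerm (k : Type*) [CommRing k] (c : ℕ) (hc : 1 ≤ c) :
    TruncP k c →ₐ[k] k :=
  Ideal.Quotient.liftₐ _ (aeval (0 : k)) (by
    intro a ha
    rw [Ideal.mem_span_singleton] at ha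
    obtain ⟨q, rfl⟩ := ha
    have h0 : (0 : k) ^ c = 0 := zero_pow (Nat.one_le_iff_ne_zero.mp hc)
    simp [h0])

/-- `A⁺`: the subalgebra of tuples with all constant terms equal. -/
noncomputable def Aplus (k : Type*) [CommRing k] {ι : Type*} (c : ι → ℕ)
    (hc : ∀ i, 1 ≤ c i) : Subalgebra k (TruncPi k c) :=
  ⨅ (i : ι) (j : ι),
    AlgHom.equalizer
      ((constTerm k (c i) (hc i)).comp (Pi.evalAlgHom k (fun i => TruncP k (c i)) i))
      ((constTerm k (c j) (hc j)).comp (Pi.evalAlgHom k (fun i => TruncP k (c i)) j))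

/-- `m_I`: the span of the monomials `tᵢ^j`, `i ∈ I`, `1 ≤ j ≤ cᵢ - 1`. -/
noncomputable def mPart (k : Type*) [CommRing k] {ι : Type*} [DecidableEq ι]
    (c : ι → ℕ) (I : Set ι) : Submodule k (TruncPi k c) :=
  Submodule.span k {x | ∃ i ∈ I, ∃ j, 1 ≤ j ∧ j < c i ∧ x = tpow c i j}

/-- `𝔪^d`: the span of the monomials of degree at least `d`. -/
noncomputable def mPow (k : Type*) [CommRing k] {ι : Type*} [DecidableEq ι]
    (c : ι → ℕ) (d : ℕ) : Submodule k (TruncPi k c) :=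
  Submodule.span k {x | ∃ i, ∃ j, d ≤ j ∧ 1 ≤ j ∧ j < c i ∧ x = tpow c i j}

/-- Componentwise projection onto the coordinates in `I` (the projection along `m_{Iᶜ}`). -/
noncomputable def projL (k : Type*) [CommRing k] {ι : Type*} [DecidableEq ι] (c : ι → ℕ)
    (I : Finset ι) : TruncPi k c →ₗ[k] TruncPi k c where
  toFun x i := if i ∈ I then x i else 0
  map_add' x y := by funext i; by_cases h : i ∈ I <;> simp [h]
  map_smul' r x := by funext i; by_cases h : i ∈ I <;> simp [h]

/-- Scaling `t ↦ λ·t` on `k[t]/(t^c)`, as a `k`-algebra homomorphism. -/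
noncomputable def scaleHom (k : Type*) [CommRing k] (c : ℕ) (lam : k) :
    TruncP k c →ₐ[k] TruncP k c :=
  Ideal.Quotient.liftₐ _ (aeval (lam • truncX k c)) (by
    intro a ha
    rw [Ideal.mem_span_singleton] at ha
    obtain ⟨q, rfl⟩ := ha
    have hx : truncX k c ^ c = 0 := by
      show (Ideal.Quotient.mk (Ideal.span {(X : Polynomial k) ^ c}) X) ^ c = 0
      rw [← map_pow, Ideal.Quotient.eq_zero_iff_mem]
      exact Ideal.mem_span_singleton_self _
    simp [_root_.smul_pow, hx])

/-- The torus action `tᵢ ↦ λᵢ·tᵢ` on `∏ i, k[tᵢ]/(tᵢ^{cᵢ})`. -/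
noncomputable def torusHom {k : Type*} [CommRing k] {ι : Type*} (c : ι → ℕ) (lam : ι → k) :
    TruncPi k c →ₐ[k] TruncPi k c :=
  Pi.algHom k _ fun i => (scaleHom k (c i) (lam i)).comp (Pi.evalAlgHom k _ i)

/-- Restriction of a tuple to the coordinates satisfying `P`, as an algebra hom. -/
noncomputable def restrictAlg (k : Type*) [CommRing k] {ι : Type*} (c : ι → ℕ)
    (P : ι → Prop) : TruncPi k c →ₐ[k] TruncPi k (fun i : {i // P i} => c i.1) where
  toFun x i := x i.1
  map_one' := rfl
  map_mul' _ _ := rfl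
  map_zero' := rfl
  map_add' _ _ := rfl
  commutes' _ := rfl

/-- The set `k·1 ⊕ {b + b' + φ(b')}` associated to a gluing datum. -/
def graphSet {k A : Type*} [CommRing k] [CommRing A] [Algebra k A]
    (bI bI' : Submodule k A) (φ : ↥bI' →ₗ[k] A) : Set A :=
  {z | ∃ r : k, ∃ b ∈ bI, ∃ b' : ↥bI', z = r • (1 : A) + b + ↑b' + φ b'}

/-!
Splitting off the constants gives `A⁺ = k·1 ⊕ 𝔪` and `B = k·1 ⊕ 𝔪_B`, so `g = dim 𝔪 - dim 𝔪_B`,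
and `𝔪 = m_{I₁} ⊕ m_{I₂}`. On `𝔪` the kernel of `π_{I₁}` is `m_{I₂}`, so rank–nullity gives
`dim π_{I₁}(𝔪_B) = dim 𝔪_B - dim J₁`, i.e. `g₁ = dim m_{I₁} - dim 𝔪_B + dim J₁`, and symmetrically
`g₂ = dim m_{I₂} - dim 𝔪_B + dim J₂`. Hence `γ = dim 𝔪_B - dim J₁ - dim J₂`. Finally
`J₁ ∩ J₂ ⊆ m_{I₂} ∩ m_{I₁} = 0`, so `dim B = 1 + dim 𝔪_B = dim (J₁ + J₂) + γ + 1`.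
-/

instance TruncP.finite {k : Type*} [Field k] (c : ℕ) : Module.Finite k (TruncP k c) :=
  (AdjoinRoot.powerBasis' (monic_X_pow (n := c))).finite

theorem Submodule.finrank_sup_of_disjoint {K V : Type*} [DivisionRing K] [AddCommGroup V]
    [Module K V] [FiniteDimensional K V] {s t : Submodule K V} (h : Disjoint s t) :
    Module.finrank K ↥(s ⊔ t) = Module.finrank K s + Module.finrank K t := by
  rw [← Submodule.finrank_sup_add_finrank_inf_eq, h.eq_bot, finrank_bot, add_zero]

theorem Submodule.finrank_map_add_finrank_inf_ker {K V W : Type*} [DivisionRing K]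
    [AddCommGroup V] [Module K V] [AddCommGroup W] [Module K W] [FiniteDimensional K V]
    (f : V →ₗ[K] W) (p : Submodule K V) :
    Module.finrank K ↥(p.map f) + Module.finrank K ↥(p ⊓ LinearMap.ker f) =
      Module.finrank K p := by
  have h := (f.domRestrict p).finrank_range_add_finrank_ker
  rwa [LinearMap.range_domRestrict, LinearMap.ker_domRestrict,
    (Submodule.equivSubtypeMap p _).finrank_eq, Submodule.map_comap_subtype] at h

section TruncP

variable {k : Type*} [Field k] (c : ℕ) (hc : 1 ≤ c)

theorem constTerm_mk (p : k[X]) : constTerm k c hc (Ideal.Quotient.mk _ p) = p.eval 0 := by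
  simp [constTerm, eval]

theorem constTerm_truncX_pow {j : ℕ} (hj : 1 ≤ j) : constTerm k c hc (truncX k c ^ j) = 0 := by
  simp [truncX, constTerm_mk, zero_pow (Nat.one_le_iff_ne_zero.mp hj)]

theorem truncX_pow_eq_zero {n : ℕ} (h : c ≤ n) : truncX k c ^ n = 0 := by
  rw [truncX, ← map_pow, Ideal.Quotient.eq_zero_iff_mem]
  exact Ideal.mem_span_singleton.mpr (pow_dvd_pow X h)

theorem mk_eq_sum_smul_truncX_pow (p : k[X]) :
    Ideal.Quotient.mk _ p = ∑ n ∈ p.support, p.coeff n • truncX k c ^ n := by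
  rw [← Ideal.Quotient.mkₐ_eq_mk k]
  conv_lhs => rw [p.as_sum_support]
  simp only [map_sum, ← smul_X_eq_monomial, map_smul, map_pow]
  rfl

theorem mem_span_truncX_pow_of_constTerm_eq_zero {z : TruncP k c}
    (hz : constTerm k c hc z = 0) :
    z ∈ Submodule.span k {x | ∃ j, 1 ≤ j ∧ j < c ∧ x = truncX k c ^ j} := by
  obtain ⟨p, rfl⟩ := Ideal.Quotient.mk_surjective z
  rw [constTerm_mk, ← coeff_zero_eq_eval_zero] at hz
  rw [mk_eq_sum_smul_truncX_pow]
  refine Submodule.sum_mem _ fun n _ => ?_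
  rcases Nat.eq_zero_or_pos n with rfl | hn
  · simp [hz]
  rcases lt_or_ge n c with hnc | hcn
  · exact Submodule.smul_mem _ _ (Submodule.subset_span ⟨n, hn, hnc, rfl⟩)
  · simp [truncX_pow_eq_zero c hcn]

end TruncP

theorem mem_Aplus_iff {k ι : Type*} [Field k] (c : ι → ℕ) (hc : ∀ i, 1 ≤ c i)
    (x : TruncPi k c) :
    x ∈ Aplus k c hc ↔
      ∀ i j, constTerm k (c i) (hc i) (x i) = constTerm k (c j) (hc j) (x j) := by
  simp [Aplus, Algebra.mem_iInf, AlgHom.mem_equalizer]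

theorem one_ne_zero_of_one_le {k ι : Type*} [Field k] [Nonempty ι] (c : ι → ℕ)
    (hc : ∀ i, 1 ≤ c i) : (1 : TruncPi k c) ≠ 0 := fun h => by
  obtain ⟨i₀⟩ := ‹Nonempty ι›
  simpa using congrArg (fun x => constTerm k (c i₀) (hc i₀) (x i₀)) h

section TruncPi

variable {k : Type*} [Field k] {ι : Type*} [DecidableEq ι] (c : ι → ℕ)

theorem mPart_union (S T : Set ι) : mPart k c (S ∪ T) = mPart k c S ⊔ mPart k c T := by
  simp only [mPart, ← Submodule.span_union]
  congr 1
  ext x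
  simp [or_and_right, exists_or]

theorem projL_eq_zero_iff (I : Finset ι) (x : TruncPi k c) :
    projL k c I x = 0 ↔ ∀ i ∈ I, x i = 0 := by
  simp [projL, funext_iff]

variable [Fintype ι]

theorem mem_mPart_iff (hc : ∀ i, 1 ≤ c i) {S : Set ι} {x : TruncPi k c} :
    x ∈ mPart k c S ↔ ∀ i, constTerm k (c i) (hc i) (x i) = 0 ∧ (i ∉ S → x i = 0) := by
  constructor
  · intro hx
    induction hx using Submodule.span_induction with
    | mem y hy =>
      obtain ⟨i, hi, j, hj, -, rfl⟩ := hy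
      intro i'
      by_cases h : i' = i
      · subst h
        simp [tpow, hi, constTerm_truncX_pow _ _ hj]
      · simp [tpow, h]
    | zero => simp
    | add y z _ _ hy hz => exact fun i => ⟨by simp [(hy i).1, (hz i).1],
        fun hi => by simp [(hy i).2 hi, (hz i).2 hi]⟩
    | smul a y _ hy => exact fun i => ⟨by simp [(hy i).1], fun hi => by simp [(hy i).2 hi]⟩
  · intro hx
    rw [← Finset.univ_sum_single x]
    refine Submodule.sum_mem _ fun i _ => ?_
    by_cases hi : i ∈ S
    · have hle : (Submodule.span k {z | ∃ j, 1 ≤ j ∧ j < c i ∧ z = truncX k (c i) ^ j}).map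
          (LinearMap.single k (fun i => TruncP k (c i)) i) ≤ mPart k c S := by
        rw [Submodule.map_span, Submodule.span_le]
        rintro _ ⟨_, ⟨j, hj, hjc, rfl⟩, rfl⟩
        exact Submodule.subset_span ⟨i, hi, j, hj, hjc, rfl⟩
      exact hle (Submodule.mem_map_of_mem
        (mem_span_truncX_pow_of_constTerm_eq_zero (c i) (hc i) (hx i).1))
    · simp [(hx i).2 hi]

theorem disjoint_mPart (hc : ∀ i, 1 ≤ c i) {S T : Set ι} (h : Disjoint S T) :
    Disjoint (mPart k c S) (mPart k c T) := by
  rw [Submodule.disjoint_def]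
  intro x hS hT
  funext i
  by_cases hi : i ∈ S
  · exact ((mem_mPart_iff c hc).mp hT i).2 (h.notMem_of_mem_left hi)
  · exact ((mem_mPart_iff c hc).mp hS i).2 hi

theorem disjoint_mPart_compl (hc : ∀ i, 1 ≤ c i) (I : Finset ι) :
    Disjoint (mPart k c ↑I) (mPart k c ↑(Iᶜ)) :=
  disjoint_mPart c hc (by rw [Finset.coe_compl]; exact disjoint_compl_right)

theorem inf_ker_projL (hc : ∀ i, 1 ≤ c i) (I : Finset ι)
    {M : Submodule k (TruncPi k c)} (hM : M ≤ mPart k c Set.univ) :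
    M ⊓ LinearMap.ker (projL k c I) = M ⊓ mPart k c ↑(Iᶜ) := by
  ext x
  simp only [Submodule.mem_inf, LinearMap.mem_ker]
  refine and_congr_right fun hx => ?_
  have hx0 := (mem_mPart_iff c hc).mp (hM hx)
  simp [projL_eq_zero_iff, mem_mPart_iff c hc, fun i => (hx0 i).1]

theorem finrank_map_projL_add_finrank_inf_mPart (hc : ∀ i, 1 ≤ c i) (I : Finset ι)
    {M : Submodule k (TruncPi k c)} (hM : M ≤ mPart k c Set.univ) :
    Module.finrank k ↥(M.map (projL k c I)) + Module.finrank k ↥(M ⊓ mPart k c ↑(Iᶜ)) =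
      Module.finrank k M := by
  rw [← inf_ker_projL c hc I hM]
  exact Submodule.finrank_map_add_finrank_inf_ker _ _

theorem mPart_le_Aplus (hc : ∀ i, 1 ≤ c i) (S : Set ι) :
    mPart k c S ≤ Subalgebra.toSubmodule (Aplus k c hc) :=
  fun x hx => (mem_Aplus_iff c hc x).mpr fun i j => by
    rw [((mem_mPart_iff c hc).mp hx i).1, ((mem_mPart_iff c hc).mp hx j).1]

theorem sub_constTerm_smul_one_mem_mPart (hc : ∀ i, 1 ≤ c i) {x : TruncPi k c}
    (hx : x ∈ Aplus k c hc) (i₀ : ι) :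
    x - constTerm k (c i₀) (hc i₀) (x i₀) • 1 ∈ mPart k c Set.univ :=
  (mem_mPart_iff c hc).mpr fun i => ⟨by simp [(mem_Aplus_iff c hc x).mp hx i i₀], by simp⟩

variable [Nonempty ι]

theorem toSubmodule_Aplus (hc : ∀ i, 1 ≤ c i) :
    Subalgebra.toSubmodule (Aplus k c hc) = Submodule.span k {1} ⊔ mPart k c Set.univ := by
  refine le_antisymm (fun x hx => ?_) (sup_le ?_ (mPart_le_Aplus c hc _))
  · obtain ⟨i₀⟩ := ‹Nonempty ι›
    rw [← add_sub_cancel (constTerm k (c i₀) (hc i₀) (x i₀) • 1) x]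
    exact Submodule.add_mem_sup (Submodule.mem_span_singleton.mpr ⟨_, rfl⟩)
      (sub_constTerm_smul_one_mem_mPart c hc hx i₀)
  · exact Submodule.span_le.mpr (Set.singleton_subset_iff.mpr (Aplus k c hc).one_mem)

theorem disjoint_span_one_mPart (hc : ∀ i, 1 ≤ c i) :
    Disjoint (Submodule.span k {(1 : TruncPi k c)}) (mPart k c Set.univ) := by
  rw [Submodule.disjoint_def]
  rintro _ h1 hx
  obtain ⟨r, rfl⟩ := Submodule.mem_span_singleton.mp h1
  obtain ⟨i₀⟩ := ‹Nonempty ι›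
  have hr := ((mem_mPart_iff c hc).mp hx i₀).1
  simp only [Pi.smul_apply, Pi.one_apply, map_smul, map_one, smul_eq_mul, mul_one] at hr
  simp [hr]

theorem finrank_eq_one_add_finrank_inf_mPart (hc : ∀ i, 1 ≤ c i)
    {B : Subalgebra k (TruncPi k c)} (hB : B ≤ Aplus k c hc) :
    Module.finrank k B =
      1 + Module.finrank k ↥(Subalgebra.toSubmodule B ⊓ mPart k c Set.univ) := by
  have h1 : Submodule.span k {(1 : TruncPi k c)} ≤ Subalgebra.toSubmodule B :=
    Submodule.span_le.mpr (Set.singleton_subset_iff.mpr B.one_mem)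
  have hB' : Subalgebra.toSubmodule B =
      Submodule.span k {1} ⊔ (mPart k c Set.univ ⊓ Subalgebra.toSubmodule B) := by
    rw [← sup_inf_assoc_of_le _ h1, ← toSubmodule_Aplus c hc]
    exact (inf_eq_right.mpr (Subalgebra.toSubmodule.monotone hB)).symm
  calc
    Module.finrank k B = Module.finrank k
        ↥(Submodule.span k {1} ⊔ (mPart k c Set.univ ⊓ Subalgebra.toSubmodule B)) := by
      rw [← hB']
      rfl
    _ = 1 + Module.finrank k ↥(Subalgebra.toSubmodule B ⊓ mPart k c Set.univ) := by
      rw [Submodule.finrank_sup_of_disjoint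
          ((disjoint_span_one_mPart c hc).mono_right inf_le_left),
        finrank_span_singleton (one_ne_zero_of_one_le c hc), inf_comm]

theorem finrank_Aplus (hc : ∀ i, 1 ≤ c i) (I : Finset ι) :
    Module.finrank k (Aplus k c hc) =
      1 + Module.finrank k ↥(mPart k c ↑I) + Module.finrank k ↥(mPart k c ↑(Iᶜ)) := by
  have hU : (↑I ∪ ↑(Iᶜ) : Set ι) = Set.univ := by simp
  rw [finrank_eq_one_add_finrank_inf_mPart c hc le_rfl, inf_eq_right.mpr (mPart_le_Aplus c hc _),
    ← hU, mPart_union, Submodule.finrank_sup_of_disjoint (disjoint_mPart_compl c hc I), add_assoc]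

end TruncPi

theorem gluing_genus_intersection_general
    {k : Type*} [Field k] {m : ℕ} (c : Fin m → ℕ) (hc : ∀ i, 1 ≤ c i)
    (I₁ : Finset (Fin m)) (h1 : I₁.Nonempty)
    (B : Subalgebra k (TruncPi k c)) (hB : B ≤ Aplus k c hc)
    (g g₁ g₂ γ : ℕ)
    (hg : Module.finrank k ↥B + g = Module.finrank k ↥(Aplus k c hc))
    (hg1 : Module.finrank k ↥(Submodule.map (projL k c I₁)
        (Subalgebra.toSubmodule B ⊓ mPart k c Set.univ)) + g₁
      = Module.finrank k ↥(mPart k c (↑I₁ : Set (Fin m))))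
    (hg2 : Module.finrank k ↥(Submodule.map (projL k c I₁ᶜ)
        (Subalgebra.toSubmodule B ⊓ mPart k c Set.univ)) + g₂
      = Module.finrank k ↥(mPart k c (↑(I₁ᶜ) : Set (Fin m))))
    (hγ : g = g₁ + g₂ + γ) :
    let mB : Submodule k (TruncPi k c) := Subalgebra.toSubmodule B ⊓ mPart k c Set.univ
    let J₁ : Submodule k (TruncPi k c) := mB ⊓ mPart k c ↑(I₁ᶜ)
    let J₂ : Submodule k (TruncPi k c) := mB ⊓ mPart k c ↑I₁
    J₁ ⊓ J₂ = ⊥ ∧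
    Module.finrank k ↥(J₁ ⊔ J₂) + (γ + 1) = Module.finrank k ↥B := by
  intro mB J₁ J₂
  have : Nonempty (Fin m) := h1.to_type
  have hJ : Disjoint J₁ J₂ := (disjoint_mPart_compl c hc I₁).symm.mono inf_le_right inf_le_right
  have hB₁ : Module.finrank k ↥B = 1 + Module.finrank k ↥mB :=
    finrank_eq_one_add_finrank_inf_mPart c hc hB
  have hπ₁ : Module.finrank k ↥((Subalgebra.toSubmodule B ⊓ mPart k c Set.univ).map
      (projL k c I₁)) + Module.finrank k ↥J₁ = Module.finrank k ↥mB :=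
    finrank_map_projL_add_finrank_inf_mPart c hc I₁ inf_le_right
  have hπ₂ : Module.finrank k ↥((Subalgebra.toSubmodule B ⊓ mPart k c Set.univ).map
      (projL k c I₁ᶜ)) + Module.finrank k ↥J₂ = Module.finrank k ↥mB := by
    have h := finrank_map_projL_add_finrank_inf_mPart c hc I₁ᶜ (M := mB) inf_le_right
    rwa [compl_compl] at h
  rw [finrank_Aplus c hc I₁] at hg
  refine ⟨hJ.eq_bot, ?_⟩
  rw [Submodule.finrank_sup_of_disjoint hJ]
  omega

/-- for a corank-`g` subalgebra `B` of `A⁺`, with restrictions to the two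
sets of branches of coranks `g₁, g₂` and gluing genus `γ = g - g₁ - g₂`, the ideals
`J₁ = 𝔪_B ∩ m_{I₂}` and `J₂ = 𝔪_B ∩ m_{I₁}` of the two restrictions satisfy `J₁ ∩ J₂ = 0`
and `dim B/(J₁ + J₂) = γ + 1` (stated as `dim(J₁ ⊔ J₂) + (γ + 1) = dim B`). -/
theorem gluing_genus_intersection
    {k : Type*} [Field k] {m : ℕ} (c : Fin m → ℕ) (hc : ∀ i, 1 ≤ c i)
    (I₁ : Finset (Fin m)) (h1 : I₁.Nonempty) (h2 : I₁ᶜ.Nonempty)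
    (B : Subalgebra k (TruncPi k c)) (hB : B ≤ Aplus k c hc)
    (g g₁ g₂ γ : ℕ)
    (hg : Module.finrank k ↥B + g = Module.finrank k ↥(Aplus k c hc))
    (hg1 : Module.finrank k ↥(Submodule.map (projL k c I₁)
        (Subalgebra.toSubmodule B ⊓ mPart k c Set.univ)) + g₁
      = Module.finrank k ↥(mPart k c (↑I₁ : Set (Fin m))))
    (hg2 : Module.finrank k ↥(Submodule.map (projL k c I₁ᶜ)
        (Subalgebra.toSubmodule B ⊓ mPart k c Set.univ)) + g₂
      = Module.finrank k ↥(mPart k c (↑(I₁ᶜ) : Set (Fin m))))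
    (hγ : g = g₁ + g₂ + γ) :
    let mB : Submodule k (TruncPi k c) := Subalgebra.toSubmodule B ⊓ mPart k c Set.univ
    let J₁ : Submodule k (TruncPi k c) := mB ⊓ mPart k c ↑(I₁ᶜ)
    let J₂ : Submodule k (TruncPi k c) := mB ⊓ mPart k c ↑I₁
    J₁ ⊓ J₂ = ⊥ ∧
    Module.finrank k ↥(J₁ ⊔ J₂) + (γ + 1) = Module.finrank k ↥B :=
  gluing_genus_intersection_general c hc I₁ h1 B hB g g₁ g₂ γ hg hg1 hg2 hγ
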